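/- arXiv:2112.05247 — 2 statements merged into one kernel-verified Lean document; each statement's English description precedes it below -/
import Mathlib

section
/- Let F : ℕ → ℝ satisfy F(1) = 1 and for all n ≥ 2, F(n) = 1 + (1/n) * Σ_{t=1}^{n-1} (1 - 1/(n-t+1)) * F(n-t). Then for all n ≥ 1, F(n) = (1 + 1/n) * Σ_{t=1}^{n} 1/(t+1). -/
/-!
Guessing `F n = (1 + 1/n) S n` with `S n = shiftedHarmonic n = H_{n+1} - 1`, the weight
`1 - 1/(k+1)` in front of `F k` cancels the factor `1 + 1/k`, so the recursion only involves
`∑_{k<n} S k`. That sum has the closed form `(n + 1) S (n - 1) - (n - 1)`, and strong induction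
closes.
-/

open Finset

theorem Finset.sum_Icc_one_reflect {M : Type*} [AddCommMonoid M] (f : ℕ → M) (n : ℕ) :
    ∑ t ∈ Icc 1 n, f (n + 1 - t) = ∑ t ∈ Icc 1 n, f t := by
  rw [← Ico_add_one_right_eq_Icc, sum_Ico_reflect f 1 (Nat.le_succ _)]
  simp

noncomputable def shiftedHarmonic (n : ℕ) : ℝ := ∑ t ∈ Icc 1 n, 1 / ((t : ℝ) + 1)

theorem shiftedHarmonic_succ (n : ℕ) :
    shiftedHarmonic (n + 1) = shiftedHarmonic n + 1 / ((n : ℝ) + 2) := by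
  rw [shiftedHarmonic, sum_Icc_succ_top (Nat.le_add_left 1 n), ← shiftedHarmonic]
  push_cast
  ring

theorem sum_shiftedHarmonic (n : ℕ) :
    ∑ k ∈ Icc 1 n, shiftedHarmonic k = ((n : ℝ) + 2) * shiftedHarmonic n - n := by
  induction n with
  | zero => simp [shiftedHarmonic]
  | succ n ih =>
    rw [sum_Icc_succ_top (Nat.le_add_left 1 n), ih, shiftedHarmonic_succ]
    have : (n : ℝ) + 2 ≠ 0 := by positivity
    push_cast
    field_simp
    ring

theorem one_sub_one_div_add_one_mul_one_add_one_div {x : ℝ} (hx : 0 < x) :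
    (1 - 1 / (x + 1)) * (1 + 1 / x) = 1 := by
  field_simp
  ring

theorem stmt_0 (F : ℕ → ℝ) (h1 : F 1 = 1)
    (hrec : ∀ n : ℕ, 2 ≤ n →
      F n = 1 + (1 / (n : ℝ)) *
        ∑ t ∈ Finset.Icc 1 (n - 1), (1 - 1 / ((n : ℝ) - t + 1)) * F (n - t)) :
    ∀ n : ℕ, 1 ≤ n →
      F n = (1 + 1 / (n : ℝ)) * ∑ t ∈ Finset.Icc 1 n, 1 / ((t : ℝ) + 1) := by
  change ∀ n, 1 ≤ n → F n = (1 + 1 / (n : ℝ)) * shiftedHarmonic n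
  intro n hn
  induction n using Nat.strong_induction_on with
  | _ n ih =>
  obtain rfl | hn2 := hn.eq_or_lt
  · simp [h1, shiftedHarmonic]
  obtain ⟨m, rfl⟩ : ∃ m, n = m + 1 := ⟨n - 1, by omega⟩
  have hterm : ∀ t ∈ Icc 1 m,
      (1 - 1 / (((m + 1 : ℕ) : ℝ) - t + 1)) * F (m + 1 - t) = shiftedHarmonic (m + 1 - t) := by
    intro t ht
    obtain ⟨ht1, htm⟩ := mem_Icc.mp ht
    have hk : (0 : ℝ) < ((m + 1 - t : ℕ) : ℝ) := by exact_mod_cast (by omega : 0 < m + 1 - t)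
    have hcast : ((m + 1 : ℕ) : ℝ) - t = ((m + 1 - t : ℕ) : ℝ) := by
      rw [Nat.cast_sub (by omega : t ≤ m + 1)]
    rw [ih (m + 1 - t) (by omega) (by omega), ← mul_assoc, hcast,
      one_sub_one_div_add_one_mul_one_add_one_div hk, one_mul]
  have hm : (0 : ℝ) < (m : ℝ) + 1 := by positivity
  rw [hrec (m + 1) hn2, Nat.add_sub_cancel, sum_congr rfl hterm, sum_Icc_one_reflect,
    sum_shiftedHarmonic, shiftedHarmonic_succ]
  push_cast
  field_simp
  ring
end

section
/- Define F : ℕ × ℕ → ℝ on pairs (k, n) with 0 ≤ k ≤ n by: F(n, n) = 0 for all n ≥ 0; F(0, 1) = 1; F(0, n) = 1 + F(0, n-1) for n ≥ 2; and for 1 ≤ k < n with n ≥ 2, F(k, n) = (1 - k/n) + (1 - k/n)^2 * F(k, n-1) + (k/n)(2 - k/n) * F(k-1, n-1). Then for all 0 ≤ k ≤ n with n ≥ 1, F(k, n) ≤ (n - k) * (1 + 1/n) * (H_{n+1} - 1), where H_m = Σ_{j=1}^{m} 1/j. -/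
noncomputable def harm (m : ℕ) : ℝ := ∑ k ∈ Finset.Icc 1 m, (1 : ℝ) / k

lemma harm_succ (n : ℕ) : harm (n + 1) = harm n + 1 / ((n : ℝ) + 1) := by
  unfold harm
  rw [Finset.sum_Icc_succ_top (by omega : 1 ≤ n + 1)]
  push_cast
  ring

lemma harm_ge_one (n : ℕ) (h : 1 ≤ n) : 1 ≤ harm n := by
  unfold harm
  calc (1:ℝ) = 1 / ((1:ℕ):ℝ) := by norm_num
    _ ≤ ∑ k ∈ Finset.Icc 1 n, (1:ℝ)/k :=
      Finset.single_le_sum (f := fun k : ℕ => (1:ℝ)/k)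
        (fun i _ => by positivity) (by simp [Finset.mem_Icc, h])

lemma alg (n k x : ℝ) (hn : 1 ≤ n) (_hk1 : 1 ≤ k) (hk : k ≤ n) (hx : 0 ≤ x) :
    (1 - k / (n+1)) + (1 - k / (n+1)) ^ 2 * ((n - k) * (1 + 1 / n) * x)
      + (k / (n+1)) * (2 - k / (n+1)) * ((n - (k - 1)) * (1 + 1 / n) * x)
    ≤ ((n + 1) - k) * (1 + 1 / (n + 1)) * (x + 1 / (n + 2)) := by
  have h1 : (0:ℝ) < n := by linarith
  have h2 : (0:ℝ) < n + 1 := by linarith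
  have h3 : (0:ℝ) < n + 2 := by linarith
  have key : ((n + 1) - k) * (1 + 1 / (n + 1)) * (x + 1 / (n + 2))
      - ((1 - k / (n+1)) + (1 - k / (n+1)) ^ 2 * ((n - k) * (1 + 1 / n) * x)
      + (k / (n+1)) * (2 - k / (n+1)) * ((n - (k - 1)) * (1 + 1 / n) * x))
      = x * ((n + 1) - k) * (n - k) / ((n + 1) * n) := by
    field_simp
    ring
  have hnn : 0 ≤ x * ((n + 1) - k) * (n - k) / ((n + 1) * n) := by
    apply div_nonneg
    · apply mul_nonneg (mul_nonneg hx (by linarith)) (by linarith)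
    · positivity
  linarith

theorem stmt_3 (F : ℕ → ℕ → ℝ)
    (hdiag : ∀ n : ℕ, F n n = 0)
    (h01 : F 0 1 = 1)
    (h0 : ∀ n : ℕ, 2 ≤ n → F 0 n = 1 + F 0 (n - 1))
    (hrec : ∀ k n : ℕ, 1 ≤ k → k < n → 2 ≤ n →
      F k n = (1 - (k : ℝ) / n) + (1 - (k : ℝ) / n) ^ 2 * F k (n - 1) +
        ((k : ℝ) / n) * (2 - (k : ℝ) / n) * F (k - 1) (n - 1)) :
    ∀ k n : ℕ, k ≤ n → 1 ≤ n →
      F k n ≤ ((n : ℝ) - k) * (1 + 1 / (n : ℝ)) * (harm (n + 1) - 1) := by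
  have main : ∀ n k : ℕ, k ≤ n → 1 ≤ n →
      F k n ≤ ((n : ℝ) - k) * (1 + 1 / (n : ℝ)) * (harm (n + 1) - 1) := by
    intro n
    induction n with
    | zero => intro k hk h1; omega
    | succ n ih =>
      intro k hk _
      rcases eq_or_lt_of_le hk with heq | hlt
      · subst heq
        simp [hdiag]
      · have hkn : k ≤ n := by omega
        rcases Nat.eq_zero_or_pos n with hn0 | hn1
        · subst hn0
          interval_cases k
          rw [h01]
          have h2 : harm 2 = harm 1 + 1 / ((1:ℝ) + 1) := by
            have := harm_succ 1; push_cast at this ⊢; linarith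
          have h1 : harm 1 = 1 := by
            have := harm_succ 0
            have h0' : harm 0 = 0 := by unfold harm; simp
            rw [h0'] at this; push_cast at this; linarith
          norm_num [h2, h1]
        · -- n ≥ 1, k ≤ n, so n+1 ≥ 2
          have hx : (0:ℝ) ≤ harm (n + 1) - 1 := by
            have := harm_ge_one (n + 1) (by omega); linarith
          have hHs : harm (n + 1 + 1) - 1 = (harm (n + 1) - 1) + 1 / ((n:ℝ) + 2) := by
            have h := harm_succ (n + 1)
            push_cast at h
            rw [h]; ring
          have hnR : (1:ℝ) ≤ (n:ℝ) := by exact_mod_cast hn1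
          rcases Nat.eq_zero_or_pos k with hk0 | hk1
          · subst hk0
            have hF : F 0 (n + 1) = 1 + F 0 n := by
              have := h0 (n + 1) (by omega)
              simpa using this
            have ih0 := ih 0 (Nat.zero_le n) hn1
            simp only [Nat.cast_zero, sub_zero] at ih0 ⊢
            have e1 : (n:ℝ) * (1 + 1 / n) = (n:ℝ) + 1 := by
              field_simp
            have e2 : ((n:ℝ) + 1) * (1 + 1 / ((n:ℝ) + 1)) = (n:ℝ) + 2 := by
              have : (0:ℝ) < (n:ℝ) + 1 := by linarith
              field_simp
              ring
            push_cast
            rw [hF]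
            rw [e1] at ih0
            calc 1 + F 0 n ≤ 1 + ((n:ℝ) + 1) * (harm (n + 1) - 1) := by linarith
              _ ≤ ((n:ℝ) + 1) * (1 + 1 / ((n:ℝ) + 1)) * (harm (n + 1 + 1) - 1) := by
                  rw [e2, hHs]
                  have hpos : (0:ℝ) < (n:ℝ) + 2 := by linarith
                  have : ((n:ℝ) + 2) * (1 / ((n:ℝ) + 2)) = 1 := by field_simp
                  nlinarith [hx]
          · -- 1 ≤ k ≤ n
            have hF := hrec k (n + 1) hk1 hlt (by omega)
            simp only [Nat.add_sub_cancel] at hF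
            have ihk := ih k hkn hn1
            have ihk1 := ih (k - 1) (by omega) hn1
            have hcast : ((k - 1 : ℕ) : ℝ) = (k:ℝ) - 1 := by
              have : (1:ℕ) ≤ k := hk1
              push_cast [this]
              ring
            rw [hcast] at ihk1
            have hkR : (1:ℝ) ≤ (k:ℝ) := by exact_mod_cast hk1
            have hknR : (k:ℝ) ≤ (n:ℝ) := by exact_mod_cast hkn
            -- coefficients
            have hc1 : (0:ℝ) ≤ (1 - (k:ℝ) / ((n:ℝ)+1)) ^ 2 := sq_nonneg _
            have hp0 : (0:ℝ) ≤ (k:ℝ) / ((n:ℝ)+1) := by positivity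
            have hp1 : (k:ℝ) / ((n:ℝ)+1) ≤ 1 := by
              rw [div_le_one (by linarith : (0:ℝ) < (n:ℝ)+1)]; linarith
            have hc2 : (0:ℝ) ≤ ((k:ℝ) / ((n:ℝ)+1)) * (2 - (k:ℝ) / ((n:ℝ)+1)) := by
              apply mul_nonneg hp0; linarith
            have step : F k (n+1) ≤
                (1 - (k:ℝ) / ((n:ℝ)+1)) + (1 - (k:ℝ) / ((n:ℝ)+1)) ^ 2 *
                  (((n:ℝ) - k) * (1 + 1 / (n:ℝ)) * (harm (n+1) - 1))
                + ((k:ℝ) / ((n:ℝ)+1)) * (2 - (k:ℝ) / ((n:ℝ)+1)) *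
                  (((n:ℝ) - ((k:ℝ) - 1)) * (1 + 1 / (n:ℝ)) * (harm (n+1) - 1)) := by
              rw [hF]
              push_cast
              gcongr
            have halg := alg (n:ℝ) (k:ℝ) (harm (n+1) - 1) hnR hkR hknR hx
            calc F k (n+1) ≤ _ := step
              _ ≤ (((n:ℝ) + 1) - k) * (1 + 1 / ((n:ℝ) + 1)) * ((harm (n+1) - 1) + 1 / ((n:ℝ) + 2)) := halg
              _ = (((n+1:ℕ):ℝ) - k) * (1 + 1 / ((n+1:ℕ):ℝ)) * (harm ((n+1) + 1) - 1) := by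
                  push_cast
                  rw [hHs]
  intro k n hk hn
  exact main n k hk hn
end
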